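/- arXiv:1304.3177 — 10 statements merged into one kernel-verified Lean document; each statement's English description precedes it below -/
import Mathlib

section
/- For any PE-CFG G, parsing expression p, and strings x, y over T: if G[p] xy ⤳CFG y, then for every string y' over T, G[p] xy' ⤳CFG y'. -/
/-- Parsing expressions over non-terminals `V` and terminals `T`. -/
inductive PExp (V T : Type) : Type where
  | eps : PExp V T
  | term : T → PExp V T
  | var : V → PExp V T
  | cat : PExp V T → PExp V T → PExp V T
  | alt : PExp V T → PExp V T → PExp V T

/-- The relation `G[p] v ⤳CFG w`, where the PE-CFG is given by its production
function `P` (the initial expression is the first explicit argument). -/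
inductive CFGMatch {V T : Type} (P : V → PExp V T) : PExp V T → List T → List T → Prop where
  | empty (x : List T) : CFGMatch P .eps x x
  | term (a : T) (x : List T) : CFGMatch P (.term a) (a :: x) x
  | var {A : V} {v w : List T} : CFGMatch P (P A) v w → CFGMatch P (.var A) v w
  | cat {p₁ p₂ : PExp V T} {v u w : List T} :
      CFGMatch P p₁ v u → CFGMatch P p₂ u w → CFGMatch P (.cat p₁ p₂) v w
  | altL {p₁ p₂ : PExp V T} {v w : List T} :
      CFGMatch P p₁ v w → CFGMatch P (.alt p₁ p₂) v w
  | altR {p₁ p₂ : PExp V T} {v w : List T} :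
      CFGMatch P p₂ v w → CFGMatch P (.alt p₁ p₂) v w

/-- Result of a PEG match: either the remaining suffix of the input, or failure. -/
inductive Res (T : Type) : Type where
  | str : List T → Res T
  | fail : Res T

/-- The relation `G[p] x ⤳PEG X` (ordered choice, explicit failure). -/
inductive PEGMatch {V T : Type} (P : V → PExp V T) : PExp V T → List T → Res T → Prop where
  | empty (x : List T) : PEGMatch P .eps x (.str x)
  | termS (a : T) (x : List T) : PEGMatch P (.term a) (a :: x) (.str x)
  | termF {b a : T} (x : List T) : b ≠ a → PEGMatch P (.term b) (a :: x) .fail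
  | termE (a : T) : PEGMatch P (.term a) [] .fail
  | var {A : V} {x : List T} {r : Res T} : PEGMatch P (P A) x r → PEGMatch P (.var A) x r
  | catS {p₁ p₂ : PExp V T} {v u : List T} {r : Res T} :
      PEGMatch P p₁ v (.str u) → PEGMatch P p₂ u r → PEGMatch P (.cat p₁ p₂) v r
  | catF {p₁ p₂ : PExp V T} {v : List T} :
      PEGMatch P p₁ v .fail → PEGMatch P (.cat p₁ p₂) v .fail
  | ordS {p₁ p₂ : PExp V T} {v w : List T} :
      PEGMatch P p₁ v (.str w) → PEGMatch P (.alt p₁ p₂) v (.str w)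
  | ordB {p₁ p₂ : PExp V T} {v w : List T} :
      PEGMatch P p₁ v .fail → PEGMatch P p₂ v (.str w) → PEGMatch P (.alt p₁ p₂) v (.str w)
  | ordF {p₁ p₂ : PExp V T} {v : List T} :
      PEGMatch P p₁ v .fail → PEGMatch P p₂ v .fail → PEGMatch P (.alt p₁ p₂) v .fail

/-- `Subterm q p`: the expression `q` is a subexpression of `p`. -/
inductive Subterm {V T : Type} : PExp V T → PExp V T → Prop where
  | refl (p : PExp V T) : Subterm p p
  | catL {q p₁ p₂ : PExp V T} : Subterm q p₁ → Subterm q (.cat p₁ p₂)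
  | catR {q p₁ p₂ : PExp V T} : Subterm q p₂ → Subterm q (.cat p₁ p₂)
  | altL {q p₁ p₂ : PExp V T} : Subterm q p₁ → Subterm q (.alt p₁ p₂)
  | altR {q p₁ p₂ : PExp V T} : Subterm q p₂ → Subterm q (.alt p₁ p₂)

/-- `q` occurs in the grammar `(P, pS)`: it is a subexpression of the initial
expression `pS` or of some production `P A`. -/
def OccursIn {V T : Type} (P : V → PExp V T) (pS : PExp V T) (q : PExp V T) : Prop :=
  Subterm q pS ∨ ∃ A : V, Subterm q (P A)

namespace CFGMatch

variable {V T : Type} {P : V → PExp V T} {p : PExp V T}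

theorem exists_eq_append {v w : List T} (h : CFGMatch P p v w) : ∃ d, v = d ++ w := by
  induction h with
  | empty _ => exact ⟨[], rfl⟩
  | term a _ => exact ⟨[a], rfl⟩
  | cat _ _ ih₁ ih₂ =>
    obtain ⟨d₁, rfl⟩ := ih₁
    obtain ⟨d₂, rfl⟩ := ih₂
    exact ⟨d₁ ++ d₂, (List.append_assoc _ _ _).symm⟩
  | var _ ih | altL _ ih | altR _ ih => exact ih

theorem append_right {v w : List T} (h : CFGMatch P p v w) (z : List T) :
    CFGMatch P p (v ++ z) (w ++ z) := by
  induction h with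
  | empty _ => exact .empty _
  | term a _ => exact .term a _
  | var _ ih => exact .var ih
  | cat _ _ ih₁ ih₂ => exact .cat ih₁ ih₂
  | altL _ ih => exact .altL ih
  | altR _ ih => exact .altR ih

theorem of_append_right {v u : List T} (h : CFGMatch P p v u) :
    ∀ {x w z : List T}, v = x ++ z → u = w ++ z → CFGMatch P p x w := by
  induction h with
  | empty _ =>
    rintro x w z hv rfl
    rw [List.append_cancel_right hv]
    exact .empty _
  | term a _ =>
    rintro x w z hv rfl
    rw [← List.cons_append] at hv
    rw [List.append_cancel_right hv.symm]
    exact .term a w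
  | var _ ih => exact fun hv hu => .var (ih hv hu)
  | cat _ h₂ ih₁ ih₂ =>
    rintro x w z hv rfl
    obtain ⟨d, rfl⟩ := h₂.exists_eq_append
    exact .cat (ih₁ hv (List.append_assoc _ _ _).symm) (ih₂ (List.append_assoc _ _ _).symm rfl)
  | altL _ ih => exact fun hv hu => .altL (ih hv hu)
  | altR _ ih => exact fun hv hu => .altR (ih hv hu)

theorem append_right_iff {x w z : List T} :
    CFGMatch P p (x ++ z) (w ++ z) ↔ CFGMatch P p x w :=
  ⟨fun h => h.of_append_right rfl rfl, fun h => h.append_right z⟩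

end CFGMatch

theorem stmt_0_general {V T : Type}
    (P : V → PExp V T) (p : PExp V T) (x y : List T)
    (h : CFGMatch P p (x ++ y) y) :
    ∀ y' : List T, CFGMatch P p (x ++ y') y' := by
  intro y'
  have hx : CFGMatch P p x [] := (CFGMatch.append_right_iff (w := [])).mp h
  simpa using hx.append_right y'

/-- If `G[p] xy ⤳CFG y` then for every `y'`, `G[p] xy' ⤳CFG y'`. -/
theorem stmt_0 {V T : Type} [Fintype V] [Fintype T]
    (P : V → PExp V T) (pS : PExp V T) (p : PExp V T) (x y : List T)
    (h : CFGMatch P p (x ++ y) y) :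
    ∀ y' : List T, CFGMatch P p (x ++ y') y' :=
  stmt_0_general P p x y h
end

section
/- Let G be a traditional CFG without useless symbols and let G' = T(G) be its corresponding PE-CFG. For every string α over V ∪ T (read as a parsing expression via right-associated concatenation of its symbols, ε if α is empty), every string x of terminals, and every string y of terminals: α ⇒*_G x if and only if G'[α] xy ⤳CFG y. -/
/-- Read a symbol (terminal or non-terminal) as a parsing expression. -/
def symToExp {V T : Type} : Symbol T V → PExp V T
  | .terminal a => .term a
  | .nonterminal A => .var A

/-- Read a string of symbols as the right-associated concatenation of its
symbols (`ε` if the string is empty). -/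
def strToExp {V T : Type} : List (Symbol T V) → PExp V T
  | [] => .eps
  | [s] => symToExp s
  | s :: rest => .cat (symToExp s) (strToExp rest)

/-- Combine a list of parsing expressions into a right-associated choice
(`ε` for the empty list). -/
def choiceOf {V T : Type} : List (PExp V T) → PExp V T
  | [] => .eps
  | [p] => p
  | p :: rest => .alt p (choiceOf rest)

/-- The production function of the PE-CFG `T(G)`: each non-terminal is mapped to
the right-associated choice of the right-hand sides of its productions,
enumerated (in some fixed order) by `prods`. -/
def transP {T : Type} (G : ContextFreeGrammar T)
    (prods : G.NT → List (List (Symbol T G.NT))) : G.NT → PExp G.NT T :=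
  fun A => choiceOf ((prods A).map strToExp)

/-! A match of `T(G)[p]` against `v` leaving `w` consumes a prefix `x` of `v` that `p` yields when
its non-terminals are expanded by `G`-derivations, and conversely every derivation step `A → β`
can be mirrored inside the match by choosing the alternative `β` of `P'(A)`. The one subtlety is
that `choiceOf` sends a non-terminal without productions to `ε`, which matches everything;
productivity rules this out. -/

section CFGMatch

variable {V T : Type} {P : V → PExp V T}

lemma strToExp_cons_of_ne_nil (s : Symbol T V) {l : List (Symbol T V)} (hl : l ≠ []) :
    strToExp (s :: l) = .cat (symToExp s) (strToExp l) := by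
  cases l with
  | nil => exact absurd rfl hl
  | cons _ _ => rfl

lemma cfgMatch_eps_iff {v w : List T} : CFGMatch P .eps v w ↔ v = w := by
  constructor
  · rintro ⟨⟩
    rfl
  · rintro rfl
    exact .empty v

lemma cfgMatch_strToExp_cons_iff (s : Symbol T V) (l : List (Symbol T V)) (v w : List T) :
    CFGMatch P (strToExp (s :: l)) v w ↔
      ∃ u, CFGMatch P (symToExp s) v u ∧ CFGMatch P (strToExp l) u w := by
  rcases eq_or_ne l [] with rfl | hl
  · simp only [strToExp, cfgMatch_eps_iff, exists_eq_right]
  · rw [strToExp_cons_of_ne_nil s hl]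
    constructor
    · rintro (_ | _ | _ | ⟨h₁, h₂⟩)
      exact ⟨_, h₁, h₂⟩
    · rintro ⟨u, h₁, h₂⟩
      exact .cat h₁ h₂

lemma cfgMatch_strToExp_append_iff (γ δ : List (Symbol T V)) (v w : List T) :
    CFGMatch P (strToExp (γ ++ δ)) v w ↔
      ∃ u, CFGMatch P (strToExp γ) v u ∧ CFGMatch P (strToExp δ) u w := by
  induction γ generalizing v with
  | nil => simp only [List.nil_append, strToExp, cfgMatch_eps_iff, exists_eq_left']
  | cons s γ ih =>
    simp only [List.cons_append, cfgMatch_strToExp_cons_iff, ih]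
    constructor
    · rintro ⟨u, hs, u', hγ, hδ⟩
      exact ⟨u', ⟨u, hs, hγ⟩, hδ⟩
    · rintro ⟨u', ⟨u, hs, hγ⟩, hδ⟩
      exact ⟨u, hs, u', hγ, hδ⟩

lemma cfgMatch_strToExp_terminals (x y : List T) :
    CFGMatch P (strToExp (x.map Symbol.terminal)) (x ++ y) y := by
  induction x with
  | nil => exact .empty y
  | cons a x ih => exact (cfgMatch_strToExp_cons_iff _ _ _ _).mpr ⟨x ++ y, .term a _, ih⟩

lemma cfgMatch_choiceOf_of_mem {p : PExp V T} {l : List (PExp V T)} (hp : p ∈ l) {v w : List T}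
    (h : CFGMatch P p v w) : CFGMatch P (choiceOf l) v w := by
  induction l with
  | nil => cases hp
  | cons q l ih =>
    rcases l with _ | ⟨q', l⟩
    · rw [List.mem_singleton.mp hp] at h
      exact h
    · rcases List.mem_cons.mp hp with rfl | hp
      · exact .altL h
      · exact .altR (ih hp)

end CFGMatch

section Translation

variable {T : Type} {G : ContextFreeGrammar T} {prods : G.NT → List (List (Symbol T G.NT))}

lemma cfgMatch_transP_of_derives (hcomplete : ∀ r ∈ G.rules, r.output ∈ prods r.input)
    {α : List (Symbol T G.NT)} {x : List T} (h : G.Derives α (x.map Symbol.terminal))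
    (y : List T) : CFGMatch (transP G prods) (strToExp α) (x ++ y) y := by
  induction h using Relation.ReflTransGen.head_induction_on with
  | refl => exact cfgMatch_strToExp_terminals x y
  | head hstep _ ih =>
    obtain ⟨r, hr, hrw⟩ := hstep
    obtain ⟨p, q, rfl, rfl⟩ := hrw.exists_parts
    simp only [List.append_assoc, cfgMatch_strToExp_append_iff] at ih ⊢
    obtain ⟨u₁, hp, u₂, hout, hq⟩ := ih
    have hvar : CFGMatch (transP G prods) (.var r.input) u₁ u₂ :=
      .var (cfgMatch_choiceOf_of_mem (List.mem_map_of_mem (hcomplete r hr)) hout)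
    exact ⟨u₁, hp, u₂, (cfgMatch_strToExp_cons_iff _ _ _ _).mpr ⟨u₂, hvar, .empty u₂⟩, hq⟩

variable (G) in
inductive Yields : PExp G.NT T → List T → Prop where
  | eps : Yields .eps []
  | term (a : T) : Yields (.term a) [a]
  | var {A : G.NT} {x : List T} :
      G.Derives [.nonterminal A] (x.map Symbol.terminal) → Yields (.var A) x
  | cat {p q : PExp G.NT T} {x y : List T} : Yields p x → Yields q y → Yields (.cat p q) (x ++ y)
  | altL {p q : PExp G.NT T} {x : List T} : Yields p x → Yields (.alt p q) x
  | altR {p q : PExp G.NT T} {x : List T} : Yields q x → Yields (.alt p q) x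

lemma Yields.derives_of_symToExp {s : Symbol T G.NT} {x : List T} (h : Yields G (symToExp s) x) :
    G.Derives [s] (x.map Symbol.terminal) := by
  cases s with
  | terminal a =>
    cases h
    exact .refl _
  | nonterminal A =>
    cases h with
    | var h => exact h

lemma Yields.derives_of_strToExp {β : List (Symbol T G.NT)} {x : List T}
    (h : Yields G (strToExp β) x) : G.Derives β (x.map Symbol.terminal) := by
  induction β generalizing x with
  | nil =>
    cases h
    exact .refl _
  | cons s β ih =>
    rcases eq_or_ne β [] with rfl | hβ
    · exact h.derives_of_symToExp
    · rw [strToExp_cons_of_ne_nil s hβ] at h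
      obtain _ | _ | _ | @⟨_, _, x₁, x₂, hs, hβ'⟩ := h
      rw [List.map_append]
      exact (hs.derives_of_symToExp.append_right β).trans ((ih hβ').append_left _)

lemma Yields.exists_mem_of_choiceOf {l : List (PExp G.NT T)} (hl : l ≠ []) {x : List T}
    (h : Yields G (choiceOf l) x) : ∃ p ∈ l, Yields G p x := by
  induction l with
  | nil => exact absurd rfl hl
  | cons q l ih =>
    rcases l with _ | ⟨q', l⟩
    · exact ⟨q, List.mem_singleton_self q, h⟩
    · cases h with
      | altL h => exact ⟨q, List.mem_cons_self, h⟩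
      | altR h =>
        obtain ⟨p, hp, hpx⟩ := ih (List.cons_ne_nil _ _) h
        exact ⟨p, List.mem_cons_of_mem q hp, hpx⟩

lemma exists_yields_of_cfgMatch_transP (hsound : ∀ A, ∀ β ∈ prods A, ⟨A, β⟩ ∈ G.rules)
    (hne : ∀ A, prods A ≠ []) {p : PExp G.NT T} {v w : List T}
    (h : CFGMatch (transP G prods) p v w) : ∃ x, v = x ++ w ∧ Yields G p x := by
  induction h with
  | empty => exact ⟨[], rfl, .eps⟩
  | term a => exact ⟨[a], rfl, .term a⟩
  | @var A v w _ ih =>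
    obtain ⟨x, rfl, hx⟩ := ih
    obtain ⟨_, hmem, hβ⟩ :=
      hx.exists_mem_of_choiceOf (List.map_eq_nil_iff.not.mpr (hne A))
    obtain ⟨β, hβmem, rfl⟩ := List.mem_map.mp hmem
    have hstep : G.Produces [.nonterminal A] β :=
      ⟨⟨A, β⟩, hsound A β hβmem, ContextFreeRule.Rewrites.input_output⟩
    exact ⟨x, rfl, .var (hstep.trans_derives hβ.derives_of_strToExp)⟩
  | cat _ _ ih₁ ih₂ =>
    obtain ⟨x₁, rfl, h₁⟩ := ih₁
    obtain ⟨x₂, rfl, h₂⟩ := ih₂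
    exact ⟨x₁ ++ x₂, (List.append_assoc _ _ _).symm, .cat h₁ h₂⟩
  | altL _ ih =>
    obtain ⟨x, rfl, hx⟩ := ih
    exact ⟨x, rfl, .altL hx⟩
  | altR _ ih =>
    obtain ⟨x, rfl, hx⟩ := ih
    exact ⟨x, rfl, .altR hx⟩

lemma derives_of_cfgMatch_transP (hsound : ∀ A, ∀ β ∈ prods A, ⟨A, β⟩ ∈ G.rules)
    (hne : ∀ A, prods A ≠ []) {α : List (Symbol T G.NT)} {x y : List T}
    (h : CFGMatch (transP G prods) (strToExp α) (x ++ y) y) :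
    G.Derives α (x.map Symbol.terminal) := by
  obtain ⟨x', hx', hyields⟩ := exists_yields_of_cfgMatch_transP hsound hne h
  rw [List.append_cancel_right hx']
  exact hyields.derives_of_strToExp

lemma ContextFreeGrammar.exists_rule_input_eq_of_derives_terminals {A : G.NT} {x : List T}
    (h : G.Derives [.nonterminal A] (x.map Symbol.terminal)) : ∃ r ∈ G.rules, r.input = A := by
  by_contra! hA
  refine ContextFreeGrammar.derives_nonterminal hA _ ?_ h
  cases x <;> simp

end Translation

theorem stmt_2_general {T : Type} (G : ContextFreeGrammar T)
    (prods : G.NT → List (List (Symbol T G.NT)))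
    (hprods : ∀ (A : G.NT) (β : List (Symbol T G.NT)),
      (ContextFreeRule.mk A β) ∈ G.rules ↔ β ∈ prods A)
    (hproductive : ∀ A : G.NT,
      ∃ x : List T, G.Derives [Symbol.nonterminal A] (x.map Symbol.terminal))
    (α : List (Symbol T G.NT)) (x y : List T) :
    G.Derives α (x.map Symbol.terminal) ↔
      CFGMatch (transP G prods) (strToExp α) (x ++ y) y := by
  have hne : ∀ A, prods A ≠ [] := fun A => by
    obtain ⟨_, hx⟩ := hproductive A
    obtain ⟨r, hr, rfl⟩ := G.exists_rule_input_eq_of_derives_terminals hx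
    exact List.ne_nil_of_mem ((hprods r.input r.output).mp hr)
  exact ⟨fun h => cfgMatch_transP_of_derives (fun r hr => (hprods _ _).mp hr) h y,
    derives_of_cfgMatch_transP (fun A β hβ => (hprods A β).mpr hβ) hne⟩

/-- for a traditional CFG `G` without useless symbols and its
corresponding PE-CFG `T(G)`, `α ⇒*_G x` iff `T(G)[α] xy ⤳CFG y`. -/
theorem stmt_2 {T : Type} [Fintype T] (G : ContextFreeGrammar T) [Fintype G.NT]
    (prods : G.NT → List (List (Symbol T G.NT)))
    (hprods : ∀ (A : G.NT) (β : List (Symbol T G.NT)),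
      (ContextFreeRule.mk A β) ∈ G.rules ↔ β ∈ prods A)
    (hproductive : ∀ A : G.NT,
      ∃ x : List T, G.Derives [Symbol.nonterminal A] (x.map Symbol.terminal))
    (hreachable : ∀ A : G.NT, ∃ α β : List (Symbol T G.NT),
      G.Derives [Symbol.nonterminal G.initial] (α ++ [Symbol.nonterminal A] ++ β))
    (α : List (Symbol T G.NT)) (x y : List T) :
    G.Derives α (x.map Symbol.terminal) ↔
      CFGMatch (transP G prods) (strToExp α) (x ++ y) y :=
  stmt_2_general G prods hprods hproductive α x y
end

section
/- Let G be a traditional CFG without useless symbols with initial non-terminal S. Then the language of G, { x over T | S ⇒*_G x }, equals the language of the PE-CFG T(G), { x over T | ∃y, T(G) xy ⤳CFG y }. -/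
/-!
Read every non-terminal `A` as the set of terminal words derivable from `A`. Each `P'(A)` then
denotes only words derivable from `A`, so by induction on the match every input consumed by
`T(G)[p]` lies in the language of `p`. Conversely, a derivation `β ⇒* x` is replayed as a match of
`β` on `x`, by induction on the derivation from its first step: the rewritten non-terminal is
matched through the alternative of its rule.
-/

namespace PExp

variable {V T : Type}

def lang (L : V → Language T) : PExp V T → Language T
  | eps => 1
  | term a => {[a]}
  | var A => L A
  | cat p q => p.lang L * q.lang L
  | alt p q => p.lang L + q.lang L

theorem lang_strToExp_cons (L : V → Language T) (s : Symbol T V) (β : List (Symbol T V)) :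
    (strToExp (s :: β)).lang L = (symToExp s).lang L * (strToExp β).lang L := by
  cases β with
  | nil => exact (mul_one _).symm
  | cons _ _ => rfl

theorem exists_mem_of_mem_lang_choiceOf {L : V → Language T} :
    ∀ {l : List (PExp V T)} {u : List T}, l ≠ [] → u ∈ (choiceOf l).lang L → ∃ p ∈ l, u ∈ p.lang L
  | [], _, hl, _ => absurd rfl hl
  | [p], _, _, hu => ⟨p, List.mem_singleton_self p, hu⟩
  | p :: q :: l, _, _, hu => by
    rcases (Language.mem_add _ _ _).1 hu with hu | hu
    · exact ⟨p, List.mem_cons_self, hu⟩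
    · obtain ⟨r, hr, hu⟩ := exists_mem_of_mem_lang_choiceOf (List.cons_ne_nil q l) hu
      exact ⟨r, List.mem_cons_of_mem p hr, hu⟩

end PExp

namespace CFGMatch

variable {V T : Type} {P : V → PExp V T}

theorem exists_mem_lang {L : V → Language T} (hL : ∀ A, (P A).lang L ≤ L A)
    {p : PExp V T} {v w : List T} (h : CFGMatch P p v w) : ∃ u ∈ p.lang L, v = u ++ w := by
  induction h with
  | empty x => exact ⟨[], rfl, rfl⟩
  | term a x => exact ⟨[a], rfl, rfl⟩
  | var _ ih =>
    obtain ⟨u, hu, rfl⟩ := ih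
    exact ⟨u, hL _ hu, rfl⟩
  | cat _ _ ih₁ ih₂ =>
    obtain ⟨u₁, hu₁, rfl⟩ := ih₁
    obtain ⟨u₂, hu₂, rfl⟩ := ih₂
    exact ⟨u₁ ++ u₂, Language.mem_mul.2 ⟨u₁, hu₁, u₂, hu₂, rfl⟩, (List.append_assoc _ _ _).symm⟩
  | altL _ ih =>
    obtain ⟨u, hu, rfl⟩ := ih
    exact ⟨u, Or.inl hu, rfl⟩
  | altR _ ih =>
    obtain ⟨u, hu, rfl⟩ := ih
    exact ⟨u, Or.inr hu, rfl⟩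

theorem strToExp_cons_iff {s : Symbol T V} {β : List (Symbol T V)} {v w : List T} :
    CFGMatch P (strToExp (s :: β)) v w ↔
      ∃ u, CFGMatch P (symToExp s) v u ∧ CFGMatch P (strToExp β) u w := by
  cases β with
  | nil =>
    refine ⟨fun h => ⟨w, h, .empty w⟩, ?_⟩
    rintro ⟨u, h, ⟨⟩⟩
    exact h
  | cons _ _ =>
    refine ⟨?_, fun ⟨_, h₁, h₂⟩ => .cat h₁ h₂⟩
    rintro (_ | _ | _ | ⟨h₁, h₂⟩)
    exact ⟨_, h₁, h₂⟩

theorem strToExp_append_iff {α β : List (Symbol T V)} {v w : List T} :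
    CFGMatch P (strToExp (α ++ β)) v w ↔
      ∃ u, CFGMatch P (strToExp α) v u ∧ CFGMatch P (strToExp β) u w := by
  induction α generalizing v with
  | nil =>
    refine ⟨fun h => ⟨v, .empty v, h⟩, ?_⟩
    rintro ⟨u, ⟨⟩, h⟩
    exact h
  | cons s α ih =>
    simp only [List.cons_append, strToExp_cons_iff, ih]
    exact ⟨fun ⟨u₁, hs, u₂, hα, hβ⟩ => ⟨u₂, ⟨u₁, hs, hα⟩, hβ⟩,
      fun ⟨u₂, ⟨u₁, hs, hα⟩, hβ⟩ => ⟨u₁, hs, u₂, hα, hβ⟩⟩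

theorem strToExp_map_terminal (x y : List T) :
    CFGMatch P (strToExp (x.map Symbol.terminal)) (x ++ y) y := by
  induction x with
  | nil => exact .empty y
  | cons a x ih => exact strToExp_cons_iff.2 ⟨x ++ y, .term a _, ih⟩

theorem choiceOf_of_mem :
    ∀ {l : List (PExp V T)} {p : PExp V T}, p ∈ l →
      ∀ {v w : List T}, CFGMatch P p v w → CFGMatch P (choiceOf l) v w
  | [p], _, hp, _, _, h => by
    rcases List.mem_singleton.1 hp with rfl
    exact h
  | q :: r :: l, _, hp, _, _, h => by
    rcases List.mem_cons.1 hp with rfl | hp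
    · exact .altL h
    · exact .altR (choiceOf_of_mem hp h)

end CFGMatch

namespace ContextFreeGrammar

variable {T : Type} (G : ContextFreeGrammar T)

def ntLanguage (A : G.NT) : Language T :=
  {u | G.Derives [Symbol.nonterminal A] (u.map Symbol.terminal)}

theorem exists_rule_of_derives_terminal {A : G.NT} {x : List T}
    (h : G.Derives [Symbol.nonterminal A] (x.map Symbol.terminal)) :
    ∃ β, ContextFreeRule.mk A β ∈ G.rules := by
  by_contra! hA
  refine G.derives_nonterminal (fun r hr hrA => hA r.output ?_) _ ?_ h
  · rwa [← hrA]
  · cases x <;> simp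

variable {G}

theorem derives_of_mem_lang_strToExp :
    ∀ {β : List (Symbol T G.NT)} {u : List T}, u ∈ (strToExp β).lang G.ntLanguage →
      G.Derives β (u.map Symbol.terminal)
  | [], _, rfl => .refl _
  | s :: β, _, hu => by
    rw [PExp.lang_strToExp_cons] at hu
    obtain ⟨u₁, hs, u₂, hβ, rfl⟩ := Language.mem_mul.1 hu
    have hs : G.Derives [s] (u₁.map Symbol.terminal) := by
      cases s with
      | terminal a =>
        rcases hs with rfl
        exact .refl _
      | nonterminal A => exact hs
    rw [List.map_append]
    exact (hs.append_right β).trans ((derives_of_mem_lang_strToExp hβ).append_left _)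

theorem lang_transP_le_ntLanguage {prods : G.NT → List (List (Symbol T G.NT))}
    (hrules : ∀ A β, β ∈ prods A → ContextFreeRule.mk A β ∈ G.rules) (hne : ∀ A, prods A ≠ [])
    (A : G.NT) : (transP G prods A).lang G.ntLanguage ≤ G.ntLanguage A := by
  intro u hu
  obtain ⟨_, hp, hu⟩ := PExp.exists_mem_of_mem_lang_choiceOf (by simpa using hne A) hu
  obtain ⟨β, hβ, rfl⟩ := List.mem_map.1 hp
  have hA : G.Produces [Symbol.nonterminal A] β :=
    ⟨_, hrules A β hβ, ContextFreeRule.Rewrites.input_output⟩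
  exact hA.trans_derives (derives_of_mem_lang_strToExp hu)

theorem cfgMatch_transP_of_derives {prods : G.NT → List (List (Symbol T G.NT))}
    (hprods : ∀ A β, ContextFreeRule.mk A β ∈ G.rules → β ∈ prods A)
    {β : List (Symbol T G.NT)} {x : List T} (h : G.Derives β (x.map Symbol.terminal))
    (y : List T) : CFGMatch (transP G prods) (strToExp β) (x ++ y) y := by
  induction h using Relation.ReflTransGen.head_induction_on with
  | refl => exact CFGMatch.strToExp_map_terminal x y
  | head hr _ ih =>
    obtain ⟨r, hr, hrw⟩ := hr
    obtain ⟨p, q, rfl, rfl⟩ := hrw.exists_parts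
    obtain ⟨u₁, hp, hrest⟩ := CFGMatch.strToExp_append_iff.1 (List.append_assoc p _ q ▸ ih)
    obtain ⟨u₂, hout, hq⟩ := CFGMatch.strToExp_append_iff.1 hrest
    have hvar : CFGMatch (transP G prods) (strToExp [Symbol.nonterminal r.input]) u₁ u₂ :=
      .var (CFGMatch.choiceOf_of_mem (List.mem_map_of_mem (hprods _ _ hr)) hout)
    exact CFGMatch.strToExp_append_iff.2 ⟨u₂, CFGMatch.strToExp_append_iff.2 ⟨u₁, hp, hvar⟩, hq⟩

end ContextFreeGrammar

theorem stmt_3_general {T : Type} (G : ContextFreeGrammar T)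
    (prods : G.NT → List (List (Symbol T G.NT)))
    (hprods : ∀ (A : G.NT) (β : List (Symbol T G.NT)),
      (ContextFreeRule.mk A β) ∈ G.rules ↔ β ∈ prods A)
    (hproductive : ∀ A : G.NT,
      ∃ x : List T, G.Derives [Symbol.nonterminal A] (x.map Symbol.terminal)) :
    {x : List T | G.Derives [Symbol.nonterminal G.initial] (x.map Symbol.terminal)} =
      {x : List T | ∃ y : List T,
        CFGMatch (transP G prods) (.var G.initial) (x ++ y) y} := by
  -- Without productivity an `A` with no rules would become `P'(A) = ε` and match the empty word.
  have hne : ∀ A, prods A ≠ [] := fun A hA => by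
    obtain ⟨x, hx⟩ := hproductive A
    obtain ⟨β, hβ⟩ := G.exists_rule_of_derives_terminal hx
    simpa [hA] using (hprods A β).1 hβ
  ext x
  refine ⟨fun h => ⟨[], ContextFreeGrammar.cfgMatch_transP_of_derives
    (fun A β => (hprods A β).1) h []⟩, ?_⟩
  rintro ⟨y, hm⟩
  obtain ⟨u, hu, hux⟩ := hm.exists_mem_lang
    (ContextFreeGrammar.lang_transP_le_ntLanguage (fun A β => (hprods A β).2) hne)
  rwa [List.append_cancel_right hux.symm] at hu

/-- the language of a traditional CFG `G` without useless symbols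
equals the language of the PE-CFG `T(G)` (whose initial expression is the
initial non-terminal of `G`). -/
theorem stmt_3 {T : Type} [Fintype T] (G : ContextFreeGrammar T) [Fintype G.NT]
    (prods : G.NT → List (List (Symbol T G.NT)))
    (hprods : ∀ (A : G.NT) (β : List (Symbol T G.NT)),
      (ContextFreeRule.mk A β) ∈ G.rules ↔ β ∈ prods A)
    (hproductive : ∀ A : G.NT,
      ∃ x : List T, G.Derives [Symbol.nonterminal A] (x.map Symbol.terminal))
    (hreachable : ∀ A : G.NT, ∃ α β : List (Symbol T G.NT),
      G.Derives [Symbol.nonterminal G.initial] (α ++ [Symbol.nonterminal A] ++ β)) :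
    {x : List T | G.Derives [Symbol.nonterminal G.initial] (x.map Symbol.terminal)} =
      {x : List T | ∃ y : List T,
        CFGMatch (transP G prods) (.var G.initial) (x ++ y) y} :=
  stmt_3_general G prods hprods hproductive
end

section
/- Under the relation ⤳CFG, for any PE-CFG G, parsing expressions p₁, p₂, p₃, and strings v, w over T: (commutativity) G[p₁|p₂] v ⤳CFG w iff G[p₂|p₁] v ⤳CFG w; (associativity) G[(p₁|p₂)|p₃] v ⤳CFG w iff G[p₁|(p₂|p₃)] v ⤳CFG w; (idempotence) G[p₁|p₁] v ⤳CFG w iff G[p₁] v ⤳CFG w; (left distributivity) G[p₁(p₂|p₃)] v ⤳CFG w iff G[(p₁p₂)|(p₁p₃)] v ⤳CFG w; (right distributivity) G[(p₁|p₂)p₃] v ⤳CFG w iff G[(p₁p₃)|(p₂p₃)] v ⤳CFG w. -/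
namespace CFGMatch

variable {V T : Type} {P : V → PExp V T} {p q r : PExp V T} {v w : List T}

theorem alt_iff : CFGMatch P (.alt p q) v w ↔ CFGMatch P p v w ∨ CFGMatch P q v w :=
  ⟨fun | .altL h => .inl h | .altR h => .inr h, fun | .inl h => .altL h | .inr h => .altR h⟩

theorem cat_iff :
    CFGMatch P (.cat p q) v w ↔ ∃ u, CFGMatch P p v u ∧ CFGMatch P q u w :=
  ⟨fun | .cat hp hq => ⟨_, hp, hq⟩, fun ⟨_, hp, hq⟩ => .cat hp hq⟩

theorem alt_comm : CFGMatch P (.alt p q) v w ↔ CFGMatch P (.alt q p) v w := by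
  simp only [alt_iff, or_comm]

theorem alt_assoc :
    CFGMatch P (.alt (.alt p q) r) v w ↔ CFGMatch P (.alt p (.alt q r)) v w := by
  simp only [alt_iff, or_assoc]

theorem alt_self : CFGMatch P (.alt p p) v w ↔ CFGMatch P p v w := by
  simp only [alt_iff, or_self]

theorem cat_alt_distrib :
    CFGMatch P (.cat p (.alt q r)) v w ↔ CFGMatch P (.alt (.cat p q) (.cat p r)) v w := by
  simp only [alt_iff, cat_iff, and_or_left, exists_or]

theorem alt_cat_distrib :
    CFGMatch P (.cat (.alt p q) r) v w ↔ CFGMatch P (.alt (.cat p r) (.cat q r)) v w := by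
  simp only [alt_iff, cat_iff, or_and_right, exists_or]

end CFGMatch

theorem stmt_4_general {V T : Type}
    (P : V → PExp V T) (p₁ p₂ p₃ : PExp V T) (v w : List T) :
    (CFGMatch P (.alt p₁ p₂) v w ↔ CFGMatch P (.alt p₂ p₁) v w) ∧
    (CFGMatch P (.alt (.alt p₁ p₂) p₃) v w ↔ CFGMatch P (.alt p₁ (.alt p₂ p₃)) v w) ∧
    (CFGMatch P (.alt p₁ p₁) v w ↔ CFGMatch P p₁ v w) ∧
    (CFGMatch P (.cat p₁ (.alt p₂ p₃)) v w ↔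
      CFGMatch P (.alt (.cat p₁ p₂) (.cat p₁ p₃)) v w) ∧
    (CFGMatch P (.cat (.alt p₁ p₂) p₃) v w ↔
      CFGMatch P (.alt (.cat p₁ p₃) (.cat p₂ p₃)) v w) :=
  ⟨CFGMatch.alt_comm, CFGMatch.alt_assoc, CFGMatch.alt_self, CFGMatch.cat_alt_distrib,
    CFGMatch.alt_cat_distrib⟩

/-- algebraic properties of choice and concatenation under `⤳CFG`:
commutativity, associativity and idempotence of choice, and distributivity of
concatenation over choice on both sides. -/
theorem stmt_4 {V T : Type} [Fintype V] [Fintype T]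
    (P : V → PExp V T) (p₁ p₂ p₃ : PExp V T) (v w : List T) :
    (CFGMatch P (.alt p₁ p₂) v w ↔ CFGMatch P (.alt p₂ p₁) v w) ∧
    (CFGMatch P (.alt (.alt p₁ p₂) p₃) v w ↔ CFGMatch P (.alt p₁ (.alt p₂ p₃)) v w) ∧
    (CFGMatch P (.alt p₁ p₁) v w ↔ CFGMatch P p₁ v w) ∧
    (CFGMatch P (.cat p₁ (.alt p₂ p₃)) v w ↔
      CFGMatch P (.alt (.cat p₁ p₂) (.cat p₁ p₃)) v w) ∧
    (CFGMatch P (.cat (.alt p₁ p₂) p₃) v w ↔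
      CFGMatch P (.alt (.cat p₁ p₃) (.cat p₂ p₃)) v w) :=
  stmt_4_general P p₁ p₂ p₃ v w
end

section
/- For any PE-CFG G, parsing expression p, and strings x, y over T: if G[p] xy ⤳PEG y then G[p] xy ⤳CFG y. -/
/-! Each PEG rule concluding a success is a CFG rule once its failure premises are dropped:
ordered choice `ord.2` becomes `choice.2` by forgetting that `p₁` failed. -/

theorem PEGMatch.cfgMatch_of_str {V T : Type} {P : V → PExp V T} {p : PExp V T}
    {v w : List T} (h : PEGMatch P p v (.str w)) : CFGMatch P p v w := by
  generalize hr : Res.str w = r at h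
  induction h generalizing w with
  | empty => cases hr; exact .empty _
  | termS => cases hr; exact .term _ _
  | termF | termE | catF | ordF => cases hr
  | var _ ih => exact .var (ih hr)
  | catS _ _ ih₁ ih₂ => exact .cat (ih₁ rfl) (ih₂ hr)
  | ordS _ ih => exact .altL (ih hr)
  | ordB _ _ _ ih₂ => exact .altR (ih₂ hr)

theorem stmt_5_general {V T : Type}
    (P : V → PExp V T) (p : PExp V T) (x y : List T)
    (h : PEGMatch P p (x ++ y) (.str y)) :
    CFGMatch P p (x ++ y) y :=
  h.cfgMatch_of_str

/-- if `G[p] xy ⤳PEG y` then `G[p] xy ⤳CFG y`. -/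
theorem stmt_5 {V T : Type} [Fintype V] [Fintype T]
    (P : V → PExp V T) (p : PExp V T) (x y : List T)
    (h : PEGMatch P p (x ++ y) (.str y)) :
    CFGMatch P p (x ++ y) y :=
  stmt_5_general P p x y h
end

section
/- For any PE-CFG G, parsing expression p, string x over T, and results X, X' (each either a string over T or fail): if G[p] x ⤳PEG X and G[p] x ⤳PEG X' then X = X'; moreover, any two derivation trees for G[p] x ⤳PEG X are equal (the derivation is unique). -/
/-- Derivation trees for the relation `⤳PEG`: the inductive type of derivations
built from the inference rules of `⤳PEG`. -/
inductive PEGDeriv {V T : Type} (P : V → PExp V T) : PExp V T → List T → Res T → Type where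
  | empty (x : List T) : PEGDeriv P .eps x (.str x)
  | termS (a : T) (x : List T) : PEGDeriv P (.term a) (a :: x) (.str x)
  | termF {b a : T} (x : List T) : b ≠ a → PEGDeriv P (.term b) (a :: x) .fail
  | termE (a : T) : PEGDeriv P (.term a) [] .fail
  | var (A : V) {x : List T} {r : Res T} : PEGDeriv P (P A) x r → PEGDeriv P (.var A) x r
  | catS {p₁ p₂ : PExp V T} {v u : List T} {r : Res T} :
      PEGDeriv P p₁ v (.str u) → PEGDeriv P p₂ u r → PEGDeriv P (.cat p₁ p₂) v r
  | catF {p₁ : PExp V T} (p₂ : PExp V T) {v : List T} :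
      PEGDeriv P p₁ v .fail → PEGDeriv P (.cat p₁ p₂) v .fail
  | ordS {p₁ : PExp V T} (p₂ : PExp V T) {v w : List T} :
      PEGDeriv P p₁ v (.str w) → PEGDeriv P (.alt p₁ p₂) v (.str w)
  | ordB {p₁ p₂ : PExp V T} {v w : List T} :
      PEGDeriv P p₁ v .fail → PEGDeriv P p₂ v (.str w) → PEGDeriv P (.alt p₁ p₂) v (.str w)
  | ordF {p₁ p₂ : PExp V T} {v : List T} :
      PEGDeriv P p₁ v .fail → PEGDeriv P p₂ v .fail → PEGDeriv P (.alt p₁ p₂) v .fail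

/-! Two derivations of `G[p] x` must apply the same rule at the root: the shape of `p` fixes the
candidates, and where two rules compete (`catS`/`catF`, `ordS`/`ordB`/`ordF`) they are told apart
by the result of the first premise, which the induction hypothesis has already shown to agree.
Hence the two trees coincide node by node, results included, and determinism of `⤳PEG`
follows because every `PEGMatch` has a derivation. -/

section

variable {V T : Type} {P : V → PExp V T}

namespace PEGDeriv

theorem eq_and_heq {p : PExp V T} {x : List T} {X X' : Res T}
    (d : PEGDeriv P p x X) (d' : PEGDeriv P p x X') : X = X' ∧ HEq d d' := by
  induction d generalizing X' with
  | empty => cases d'; exact ⟨rfl, .rfl⟩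
  | termS => cases d' with
    | termS => exact ⟨rfl, .rfl⟩
    | termF _ hne => exact absurd rfl hne
  | termF _ hne => cases d' with
    | termS => exact absurd rfl hne
    | termF => exact ⟨rfl, .rfl⟩
  | termE => cases d'; exact ⟨rfl, .rfl⟩
  | var _ _ ih => cases d' with
    | var _ d' => obtain ⟨rfl, ⟨⟩⟩ := ih d'; exact ⟨rfl, .rfl⟩
  | catS d₁ d₂ ih₁ ih₂ => cases d' with
    | catS d₁' d₂' =>
      obtain ⟨⟨⟩, ⟨⟩⟩ := ih₁ d₁'
      obtain ⟨rfl, ⟨⟩⟩ := ih₂ d₂'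
      exact ⟨rfl, .rfl⟩
    | catF _ d₁' => cases (ih₁ d₁').1
  | catF _ d₁ ih₁ => cases d' with
    | catS d₁' _ => cases (ih₁ d₁').1
    | catF _ d₁' => obtain ⟨-, ⟨⟩⟩ := ih₁ d₁'; exact ⟨rfl, .rfl⟩
  | ordS _ d₁ ih₁ => cases d' with
    | ordS _ d₁' => obtain ⟨⟨⟩, ⟨⟩⟩ := ih₁ d₁'; exact ⟨rfl, .rfl⟩
    | ordB d₁' _ => cases (ih₁ d₁').1
    | ordF d₁' _ => cases (ih₁ d₁').1
  | ordB d₁ d₂ ih₁ ih₂ => cases d' with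
    | ordS _ d₁' => cases (ih₁ d₁').1
    | ordB d₁' d₂' =>
      obtain ⟨-, ⟨⟩⟩ := ih₁ d₁'
      obtain ⟨⟨⟩, ⟨⟩⟩ := ih₂ d₂'
      exact ⟨rfl, .rfl⟩
    | ordF _ d₂' => cases (ih₂ d₂').1
  | ordF d₁ d₂ ih₁ ih₂ => cases d' with
    | ordS _ d₁' => cases (ih₁ d₁').1
    | ordB _ d₂' => cases (ih₂ d₂').1
    | ordF d₁' d₂' =>
      obtain ⟨-, ⟨⟩⟩ := ih₁ d₁'
      obtain ⟨-, ⟨⟩⟩ := ih₂ d₂'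
      exact ⟨rfl, .rfl⟩

instance {p : PExp V T} {x : List T} {X : Res T} : Subsingleton (PEGDeriv P p x X) :=
  ⟨fun d d' => eq_of_heq (d.eq_and_heq d').2⟩

end PEGDeriv

theorem PEGMatch.nonempty_deriv {p : PExp V T} {x : List T} {X : Res T}
    (h : PEGMatch P p x X) : Nonempty (PEGDeriv P p x X) := by
  induction h with
  | empty x => exact ⟨.empty x⟩
  | termS a x => exact ⟨.termS a x⟩
  | termF x hne => exact ⟨.termF x hne⟩
  | termE a => exact ⟨.termE a⟩
  | var _ ih => exact ⟨.var _ ih.some⟩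
  | catS _ _ ih₁ ih₂ => exact ⟨.catS ih₁.some ih₂.some⟩
  | catF _ ih₁ => exact ⟨.catF _ ih₁.some⟩
  | ordS _ ih₁ => exact ⟨.ordS _ ih₁.some⟩
  | ordB _ _ ih₁ ih₂ => exact ⟨.ordB ih₁.some ih₂.some⟩
  | ordF _ _ ih₁ ih₂ => exact ⟨.ordF ih₁.some ih₂.some⟩

end

theorem stmt_6_general {V T : Type}
    (P : V → PExp V T) (p : PExp V T) (x : List T) (X X' : Res T)
    (h : PEGMatch P p x X) (h' : PEGMatch P p x X') :
    X = X' ∧ ∀ e e' : PEGDeriv P p x X, e = e' := by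
  obtain ⟨d⟩ := h.nonempty_deriv
  obtain ⟨d'⟩ := h'.nonempty_deriv
  exact ⟨(d.eq_and_heq d').1, Subsingleton.elim⟩

/-- the result of `G[p] x` under `⤳PEG` is unique, and the
derivation tree for `G[p] x ⤳PEG X` is unique. -/
theorem stmt_6 {V T : Type} [Fintype V] [Fintype T]
    (P : V → PExp V T) (p : PExp V T) (x : List T) (X X' : Res T)
    (h : PEGMatch P p x X) (h' : PEGMatch P p x X') :
    X = X' ∧ ∀ e e' : PEGDeriv P p x X, e = e' :=
  stmt_6_general P p x X X' h h'
end

section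
/- Let G be a complete LL(1) PE-CFG with BNF structure over terminal alphabet T, and let $ ∉ T be a fresh end-of-input marker. Then for every string x over T: G x$ ⤳CFG $ if and only if G x$ ⤳PEG $. Hence G has the same language (of $-terminated inputs) whether interpreted as a CFG or as a PEG. -/
/-- Derivation trees for the relation `⤳CFG`: the inductive type of derivations
built from the inference rules of `⤳CFG`. -/
inductive CDeriv {V T : Type} (P : V → PExp V T) : PExp V T → List T → List T → Type where
  | empty (x : List T) : CDeriv P .eps x x
  | term (a : T) (x : List T) : CDeriv P (.term a) (a :: x) x
  | var (A : V) {v w : List T} : CDeriv P (P A) v w → CDeriv P (.var A) v w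
  | cat {p₁ p₂ : PExp V T} {v u w : List T} :
      CDeriv P p₁ v u → CDeriv P p₂ u w → CDeriv P (.cat p₁ p₂) v w
  | altL {p₁ : PExp V T} (p₂ : PExp V T) {v w : List T} :
      CDeriv P p₁ v w → CDeriv P (.alt p₁ p₂) v w
  | altR (p₁ : PExp V T) {p₂ : PExp V T} {v w : List T} :
      CDeriv P p₂ v w → CDeriv P (.alt p₁ p₂) v w

/-- `InTree P d J`: the judgment `J = (q, v, w)` (read `G[q] v ⤳CFG w`) occurs
in the derivation tree `d`, i.e. it is the conclusion of one of its subtrees. -/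
inductive InTree {V T : Type} (P : V → PExp V T) :
    ∀ {p : PExp V T} {v w : List T}, CDeriv P p v w → PExp V T × List T × List T → Prop where
  | here {p : PExp V T} {v w : List T} (d : CDeriv P p v w) : InTree P d (p, v, w)
  | var {A : V} {v w : List T} {d : CDeriv P (P A) v w} {J} :
      InTree P d J → InTree P (.var A d) J
  | catL {p₁ p₂ : PExp V T} {v u w : List T}
      {d₁ : CDeriv P p₁ v u} {d₂ : CDeriv P p₂ u w} {J} :
      InTree P d₁ J → InTree P (.cat d₁ d₂) J
  | catR {p₁ p₂ : PExp V T} {v u w : List T}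
      {d₁ : CDeriv P p₁ v u} {d₂ : CDeriv P p₂ u w} {J} :
      InTree P d₂ J → InTree P (.cat d₁ d₂) J
  | altL {p₁ p₂ : PExp V T} {v w : List T} {d : CDeriv P p₁ v w} {J} :
      InTree P d J → InTree P (.altL p₂ d) J
  | altR {p₁ p₂ : PExp V T} {v w : List T} {d : CDeriv P p₂ v w} {J} :
      InTree P d J → InTree P (.altR p₁ d) J

/-- `G[p]` matches the empty string. -/
def Nullable {V T : Type} (P : V → PExp V T) (p : PExp V T) : Prop :=
  ∃ w : List T, CFGMatch P p w w

/-- No choice expression occurs in `p`. -/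
def ChoiceFree {V T : Type} (p : PExp V T) : Prop :=
  ∀ q₁ q₂ : PExp V T, ¬ Subterm (.alt q₁ q₂) p

/-- The grammar `(P, pS)` has BNF structure: no choice occurs inside a
concatenation, the initial expression is a single non-terminal, and in every
choice occurring in the grammar, if the first alternative matches the empty
string then so does the second. -/
def BNFStructure {V T : Type} (P : V → PExp V T) (pS : PExp V T) : Prop :=
  (∀ p₁ p₂ : PExp V T, OccursIn P pS (.cat p₁ p₂) → ChoiceFree p₁ ∧ ChoiceFree p₂) ∧
  (∃ A : V, pS = .var A) ∧
  (∀ p₁ p₂ : PExp V T, OccursIn P pS (.alt p₁ p₂) → Nullable P p₁ → Nullable P p₂)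

/-! Terminal alphabet `T` extended with a fresh end-of-input marker `$`,
modelled as `Option T` with `none` playing the role of `$`. -/

/-- The terminal part of `FIRST^G(p)`: terminals `a ∈ T` (not the marker) that
can start a string matched by `G[p]`. -/
def FIRSTt {V T : Type} (P : V → PExp V (Option T)) (p : PExp V (Option T)) :
    Set (Option T) :=
  {a : Option T | (∃ t : T, a = some t) ∧
    ∃ v y : List (Option T), CFGMatch P p (a :: (v ++ y)) y}

/-- `FOLLOW^G(A)`: symbols `a ∈ T ∪ {$}` such that the judgment
`G[A] yaz ⤳CFG az` occurs in some derivation tree for `G w$ ⤳CFG $`. -/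
def FOLLOW {V T : Type} (P : V → PExp V (Option T)) (pS : PExp V (Option T)) (A : V) :
    Set (Option T) :=
  {a : Option T | ∃ (w : List T) (y z : List (Option T))
    (d : CDeriv P pS (w.map some ++ [none]) [none]),
    InTree P d (.var A, y ++ a :: z, a :: z)}

/-- The grammar `(P, pS)` (with BNF structure, possibly with `ε` expressions)
is LL(1): for every production `A → p` and every choice `p₁|p₂` occurring in
`p`, (1) `FIRST(p₁) ∩ FIRST(p₂) = ∅` (in particular at most one alternative is
nullable), and (2) if `ε ∈ FIRST(p₂)` then `FIRST(p₁) ∩ FOLLOW(A) = ∅`. -/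
def IsLL1Eps {V T : Type} (P : V → PExp V (Option T)) (pS : PExp V (Option T)) : Prop :=
  ∀ (A : V) (p₁ p₂ : PExp V (Option T)), Subterm (.alt p₁ p₂) (P A) →
    (FIRSTt P p₁ ∩ FIRSTt P p₂ = ∅ ∧ ¬ (Nullable P p₁ ∧ Nullable P p₂)) ∧
    (Nullable P p₂ → FIRSTt P p₁ ∩ FOLLOW P pS A = ∅)

/-- The grammar `(P, pS)` is complete: every expression occurring in it either
succeeds or fails (as a PEG) on every input. -/
def CompleteG {V T : Type} (P : V → PExp V T) (pS : PExp V T) : Prop :=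
  ∀ p : PExp V T, OccursIn P pS p → ∀ x : List T,
    (∃ x' : List T, PEGMatch P p x (.str x')) ∨ PEGMatch P p x .fail

/-!
A successful PEG match is a CFG match in which each choice is resolved in a particular way, so
one direction is immediate. Conversely, a CFG derivation of `x$` is rebuilt bottom-up as a PEG
derivation. The only rule that does not transfer directly is a choice `p₁|p₂` where the CFG took
`p₂`: the PEG needs `p₁` to fail. By completeness `p₁` otherwise succeeds, either on the empty
string (then both alternatives are nullable, by BNF structure) or consuming a first symbol
`t ∈ FIRST(p₁)` (never `$`, which does not occur in `G`). By LL(1), `t` can be neither the first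
symbol consumed by `p₂` nor, if `p₂` consumed nothing, the symbol after it. As no choice sits
under a concatenation, the input left after the choice is the input left after the non-terminal
`A` whose production contains it, so that symbol lies in `FOLLOW(A)`.
-/

section General

variable {V T : Type} {P : V → PExp V T}

theorem Subterm.trans {a b c : PExp V T} (hab : Subterm a b) (hbc : Subterm b c) :
    Subterm a c := by
  induction hbc with
  | refl => exact hab
  | catL _ ih => exact .catL ih
  | catR _ ih => exact .catR ih
  | altL _ ih => exact .altL ih
  | altR _ ih => exact .altR ih

theorem OccursIn.of_subterm {pS p q : PExp V T} (hp : OccursIn P pS p) (hq : Subterm q p) :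
    OccursIn P pS q :=
  hp.imp (hq.trans ·) fun ⟨A, h⟩ => ⟨A, hq.trans h⟩

theorem CDeriv.cfgMatch {p : PExp V T} {v u : List T} (d : CDeriv P p v u) :
    CFGMatch P p v u := by
  induction d with
  | empty x => exact .empty x
  | term a x => exact .term a x
  | var _ _ ih => exact .var ih
  | cat _ _ ih₁ ih₂ => exact .cat ih₁ ih₂
  | altL _ _ ih => exact .altL ih
  | altR _ _ ih => exact .altR ih

theorem CFGMatch.nonempty_cderiv {p : PExp V T} {v u : List T} (h : CFGMatch P p v u) :
    Nonempty (CDeriv P p v u) := by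
  induction h with
  | empty x => exact ⟨.empty x⟩
  | term a x => exact ⟨.term a x⟩
  | @var A _ _ _ ih => exact ⟨.var A ih.some⟩
  | cat _ _ ih₁ ih₂ => exact ⟨.cat ih₁.some ih₂.some⟩
  | @altL _ p₂ _ _ _ ih => exact ⟨.altL p₂ ih.some⟩
  | @altR p₁ _ _ _ _ ih => exact ⟨.altR p₁ ih.some⟩

theorem PEGMatch.cfgMatch {p : PExp V T} {v u : List T} (h : PEGMatch P p v (.str u)) :
    CFGMatch P p v u := by
  generalize hr : Res.str u = r at h
  induction h generalizing u with
  | empty x => cases hr; exact .empty x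
  | termS a x => cases hr; exact .term a x
  | var _ ih => exact .var (ih hr)
  | catS _ _ ih₁ ih₂ => exact .cat (ih₁ rfl) (ih₂ hr)
  | ordS _ ih => cases hr; exact .altL (ih rfl)
  | ordB _ _ _ ih₂ => cases hr; exact .altR (ih₂ rfl)
  | termF | termE | catF | ordF => cases hr

end General

section EndMarker

variable {V T : Type} {P : V → PExp V (Option T)} {pS : PExp V (Option T)}

theorem CFGMatch.exists_eq_append_none_notMem (hNoDollar : ¬ OccursIn P pS (.term none))
    {p : PExp V (Option T)} {v u : List (Option T)} (h : CFGMatch P p v u)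
    (hp : OccursIn P pS p) : ∃ c, v = c ++ u ∧ none ∉ c := by
  induction h with
  | empty x => exact ⟨[], rfl, List.not_mem_nil⟩
  | term a x =>
    refine ⟨[a], rfl, ?_⟩
    rintro (_ | ⟨_, ⟨⟩⟩)
    exact hNoDollar hp
  | @var A _ _ _ ih => exact ih (Or.inr ⟨A, .refl _⟩)
  | cat _ _ ih₁ ih₂ =>
    obtain ⟨c₁, rfl, hc₁⟩ := ih₁ (hp.of_subterm (.catL (.refl _)))
    obtain ⟨c₂, rfl, hc₂⟩ := ih₂ (hp.of_subterm (.catR (.refl _)))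
    exact ⟨c₁ ++ c₂, (List.append_assoc _ _ _).symm, by simp [hc₁, hc₂]⟩
  | altL _ ih => exact ih (hp.of_subterm (.altL (.refl _)))
  | altR _ ih => exact ih (hp.of_subterm (.altR (.refl _)))

theorem CFGMatch.eq_or_exists_mem_FIRSTt (hNoDollar : ¬ OccursIn P pS (.term none))
    {p : PExp V (Option T)} {v u : List (Option T)} (h : CFGMatch P p v u)
    (hp : OccursIn P pS p) : v = u ∨ ∃ t z, v = some t :: z ∧ some t ∈ FIRSTt P p := by
  obtain ⟨c, rfl, hc⟩ := h.exists_eq_append_none_notMem hNoDollar hp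
  match c, hc, h with
  | [], _, _ => exact Or.inl rfl
  | none :: _, hc, _ => exact absurd List.mem_cons_self hc
  | some t :: c', _, h => exact Or.inr ⟨t, c' ++ u, rfl, ⟨t, rfl⟩, c', u, h⟩

theorem PEGMatch.fail_of_cfgMatch_altR (hNoDollar : ¬ OccursIn P pS (.term none))
    (hbnf : BNFStructure P pS) (hll1 : IsLL1Eps P pS) (hcomplete : CompleteG P pS)
    {A : V} {p₁ p₂ : PExp V (Option T)} (hA : Subterm (.alt p₁ p₂) (P A))
    {v u : List (Option T)} (h₂ : CFGMatch P p₂ v u)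
    (hfollow : ∀ a ∈ u.head?, a ∈ FOLLOW P pS A) :
    PEGMatch P p₁ v .fail := by
  have hocc : OccursIn P pS (.alt p₁ p₂) := Or.inr ⟨A, hA⟩
  have hocc₁ := hocc.of_subterm (.altL (.refl _))
  have hocc₂ := hocc.of_subterm (.altR (.refl _))
  obtain ⟨⟨hdisjoint, hnotBothNullable⟩, hfirstFollow⟩ := hll1 A p₁ p₂ hA
  refine (hcomplete p₁ hocc₁ v).resolve_left fun ⟨u', hpeg⟩ => ?_
  rcases hpeg.cfgMatch.eq_or_exists_mem_FIRSTt hNoDollar hocc₁ with rfl | ⟨t, z, rfl, ht₁⟩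
  · have hnull₁ : Nullable P p₁ := ⟨_, hpeg.cfgMatch⟩
    exact hnotBothNullable ⟨hnull₁, hbnf.2.2 p₁ p₂ hocc hnull₁⟩
  rcases h₂.eq_or_exists_mem_FIRSTt hNoDollar hocc₂ with rfl | ⟨t', z', heq, ht₂⟩
  · have htFollow : some t ∈ FOLLOW P pS A := hfollow _ rfl
    exact (hfirstFollow ⟨_, h₂⟩).subset ⟨ht₁, htFollow⟩
  · exact hdisjoint.subset ⟨ht₁, (List.cons.inj heq).1 ▸ ht₂⟩

theorem CDeriv.pegMatch (hNoDollar : ¬ OccursIn P pS (.term none))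
    (hbnf : BNFStructure P pS) (hll1 : IsLL1Eps P pS) (hcomplete : CompleteG P pS)
    {p : PExp V (Option T)} {v u : List (Option T)} (d : CDeriv P p v u)
    (hocc : OccursIn P pS p)
    (htree : ∀ A y a z, InTree P d (.var A, y ++ a :: z, a :: z) → a ∈ FOLLOW P pS A)
    (hctx : ChoiceFree p ∨ ∃ A, Subterm p (P A) ∧ ∀ a ∈ u.head?, a ∈ FOLLOW P pS A) :
    PEGMatch P p v (.str u) := by
  induction d with
  | empty x => exact .empty x
  | term a x => exact .termS a x
  | var A d ih =>
    refine .var (ih (Or.inr ⟨A, .refl _⟩) (fun B y a z h => htree B y a z (.var h)) ?_)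
    refine Or.inr ⟨A, .refl _, fun a ha => ?_⟩
    obtain ⟨z, rfl⟩ : ∃ z, _ = a :: z := ⟨_, List.eq_cons_of_mem_head? ha⟩
    obtain ⟨y, rfl, -⟩ := d.cfgMatch.exists_eq_append_none_notMem hNoDollar (Or.inr ⟨A, .refl _⟩)
    exact htree A y a z (.here _)
  | cat d₁ d₂ ih₁ ih₂ =>
    obtain ⟨hfree₁, hfree₂⟩ := hbnf.1 _ _ hocc
    exact .catS
      (ih₁ (hocc.of_subterm (.catL (.refl _))) (fun B y a z h => htree B y a z (.catL h))
        (Or.inl hfree₁))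
      (ih₂ (hocc.of_subterm (.catR (.refl _))) (fun B y a z h => htree B y a z (.catR h))
        (Or.inl hfree₂))
  | altL p₂ d ih =>
    obtain ⟨A, hA, hfollow⟩ := hctx.resolve_left fun hfree => hfree _ _ (.refl _)
    exact .ordS (ih (hocc.of_subterm (.altL (.refl _))) (fun B y a z h => htree B y a z (.altL h))
      (Or.inr ⟨A, (Subterm.altL (.refl _)).trans hA, hfollow⟩))
  | altR p₁ d ih =>
    obtain ⟨A, hA, hfollow⟩ := hctx.resolve_left fun hfree => hfree _ _ (.refl _)
    exact .ordB
      (PEGMatch.fail_of_cfgMatch_altR hNoDollar hbnf hll1 hcomplete hA d.cfgMatch hfollow)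
      (ih (hocc.of_subterm (.altR (.refl _))) (fun B y a z h => htree B y a z (.altR h))
        (Or.inr ⟨A, (Subterm.altR (.refl _)).trans hA, hfollow⟩))

end EndMarker

theorem stmt_9_general {V T : Type}
    (P : V → PExp V (Option T)) (pS : PExp V (Option T))
    (hNoDollar : ¬ OccursIn P pS (.term (none : Option T)))
    (hbnf : BNFStructure P pS) (hll1 : IsLL1Eps P pS) (hcomplete : CompleteG P pS) :
    (∀ x : List T,
      CFGMatch P pS (x.map some ++ [none]) [none] ↔
        PEGMatch P pS (x.map some ++ [none]) (.str [none])) ∧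
    {x : List T | CFGMatch P pS (x.map some ++ [none]) [none]} =
      {x : List T | PEGMatch P pS (x.map some ++ [none]) (.str [none])} := by
  obtain ⟨A₀, rfl⟩ := hbnf.2.1
  have hiff (x : List T) : CFGMatch P (.var A₀) (x.map some ++ [none]) [none] ↔
      PEGMatch P (.var A₀) (x.map some ++ [none]) (.str [none]) := by
    refine ⟨fun hcfg => ?_, PEGMatch.cfgMatch⟩
    obtain ⟨d⟩ := hcfg.nonempty_cderiv
    refine d.pegMatch hNoDollar hbnf hll1 hcomplete (Or.inl (.refl _))
      (fun A y a z h => ⟨x, y, z, d, h⟩) (Or.inl fun _ _ h => ?_)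
    cases h
  exact ⟨hiff, Set.ext hiff⟩

/-- a complete LL(1) PE-CFG `G` with BNF structure over terminal
alphabet `T` (the fresh marker `$ = none` does not occur in `G`) satisfies
`G x$ ⤳CFG $` iff `G x$ ⤳PEG $`, hence it has the same language of
`$`-terminated inputs as a CFG and as a PEG. -/
theorem stmt_9 {V T : Type} [Fintype V] [Fintype T]
    (P : V → PExp V (Option T)) (pS : PExp V (Option T))
    (hNoDollar : ¬ OccursIn P pS (.term (none : Option T)))
    (hbnf : BNFStructure P pS) (hll1 : IsLL1Eps P pS) (hcomplete : CompleteG P pS) :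
    (∀ x : List T,
      CFGMatch P pS (x.map some ++ [none]) [none] ↔
        PEGMatch P pS (x.map some ++ [none]) (.str [none])) ∧
    {x : List T | CFGMatch P pS (x.map some ++ [none]) [none]} =
      {x : List T | PEGMatch P pS (x.map some ++ [none]) (.str [none])} :=
  stmt_9_general P pS hNoDollar hbnf hll1 hcomplete
end

section
/- Let G be a PEG (a PE-CFG whose expressions may contain not-predicates) and p a parsing expression, and let G' and p' be the PE-CFG and expression obtained from G and p by erasing all predicates. For all strings x, y over T: if G[p] xy ⤳PEG y then G'[p'] xy ⤳CFG y. -/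
/-- Parsing expressions with the *not* syntactic predicate (PEG expressions). -/
inductive PExpN (V T : Type) : Type where
  | eps : PExpN V T
  | term : T → PExpN V T
  | var : V → PExpN V T
  | cat : PExpN V T → PExpN V T → PExpN V T
  | alt : PExpN V T → PExpN V T → PExpN V T
  | not : PExpN V T → PExpN V T

/-- The relation `G[p] x ⤳PEG X` for expressions with the *not* predicate. -/
inductive PEGMatchN {V T : Type} (P : V → PExpN V T) : PExpN V T → List T → Res T → Prop where
  | empty (x : List T) : PEGMatchN P .eps x (.str x)
  | termS (a : T) (x : List T) : PEGMatchN P (.term a) (a :: x) (.str x)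
  | termF {b a : T} (x : List T) : b ≠ a → PEGMatchN P (.term b) (a :: x) .fail
  | termE (a : T) : PEGMatchN P (.term a) [] .fail
  | var {A : V} {x : List T} {r : Res T} : PEGMatchN P (P A) x r → PEGMatchN P (.var A) x r
  | catS {p₁ p₂ : PExpN V T} {v u : List T} {r : Res T} :
      PEGMatchN P p₁ v (.str u) → PEGMatchN P p₂ u r → PEGMatchN P (.cat p₁ p₂) v r
  | catF {p₁ p₂ : PExpN V T} {v : List T} :
      PEGMatchN P p₁ v .fail → PEGMatchN P (.cat p₁ p₂) v .fail
  | ordS {p₁ p₂ : PExpN V T} {v w : List T} :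
      PEGMatchN P p₁ v (.str w) → PEGMatchN P (.alt p₁ p₂) v (.str w)
  | ordB {p₁ p₂ : PExpN V T} {v w : List T} :
      PEGMatchN P p₁ v .fail → PEGMatchN P p₂ v (.str w) → PEGMatchN P (.alt p₁ p₂) v (.str w)
  | ordF {p₁ p₂ : PExpN V T} {v : List T} :
      PEGMatchN P p₁ v .fail → PEGMatchN P p₂ v .fail → PEGMatchN P (.alt p₁ p₂) v .fail
  | notS {p : PExpN V T} {x : List T} :
      PEGMatchN P p x .fail → PEGMatchN P (.not p) x (.str x)
  | notF {p : PExpN V T} {v w : List T} :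
      PEGMatchN P p v (.str w) → PEGMatchN P (.not p) v .fail

/-- Predicate erasure: the erasure of `(!p₁)p₂` is the erasure of `p₂`; a
predicate occurring otherwise is replaced by `ε`; all other expressions
recursively erase predicates in their subexpressions. -/
def erase {V T : Type} : PExpN V T → PExp V T
  | .eps => .eps
  | .term a => .term a
  | .var A => .var A
  | .cat (.not _) p₂ => erase p₂
  | .cat (.eps) p₂ => .cat (erase .eps) (erase p₂)
  | .cat (.term a) p₂ => .cat (erase (.term a)) (erase p₂)
  | .cat (.var A) p₂ => .cat (erase (.var A)) (erase p₂)
  | .cat (.cat q₁ q₂) p₂ => .cat (erase (.cat q₁ q₂)) (erase p₂)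
  | .cat (.alt q₁ q₂) p₂ => .cat (erase (.alt q₁ q₂)) (erase p₂)
  | .alt p₁ p₂ => .alt (erase p₁) (erase p₂)
  | .not _ => .eps

/-! Induct on the PEG derivation: failing derivations impose nothing, ordered choice is
weakened to unordered choice, and a succeeding predicate `!q` consumes no input, so dropping
it (or replacing it by `ε`) preserves the match. -/

theorem PEGMatchN.cfgMatch_erase {V T : Type} {P : V → PExpN V T} {p : PExpN V T} {v : List T}
    {r : Res T} (h : PEGMatchN P p v r) {w : List T} (hr : r = .str w) :
    CFGMatch (fun A => erase (P A)) (erase p) v w := by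
  induction h generalizing w with
  | empty => cases hr; exact .empty _
  | termS => cases hr; exact .term _ _
  | termF | termE | catF | ordF | notF => cases hr
  | var _ ih => exact .var (ih hr)
  | @catS p₁ _ _ _ _ h₁ _ ih₁ ih₂ =>
    cases p₁ with
    | not =>
      cases h₁
      exact ih₂ hr
    | _ => exact .cat (ih₁ rfl) (ih₂ hr)
  | ordS _ ih => exact .altL (ih hr)
  | ordB _ _ _ ih₂ => exact .altR (ih₂ hr)
  | notS => cases hr; exact .empty _

theorem stmt_12_general {V T : Type}
    (P : V → PExpN V T) (p : PExpN V T) (x y : List T)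
    (h : PEGMatchN P p (x ++ y) (.str y)) :
    CFGMatch (fun A => erase (P A)) (erase p) (x ++ y) y :=
  h.cfgMatch_erase rfl

/-- erasing all predicates from a PEG yields a PE-CFG whose
language contains that of the PEG: if `G[p] xy ⤳PEG y` then
`G'[p'] xy ⤳CFG y` for the erased grammar `G'` and expression `p'`. -/
theorem stmt_12 {V T : Type} [Fintype V] [Fintype T]
    (P : V → PExpN V T) (p : PExpN V T) (x y : List T)
    (h : PEGMatchN P p (x ++ y) (.str y)) :
    CFGMatch (fun A => erase (P A)) (erase p) (x ++ y) y :=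
  stmt_12_general P p x y h
end

section
/- Let G be a right-linear PE-CFG and p a right-linear parsing expression. If L(G[p]) has the prefix property, then for every subexpression q of p, L(G[q]) has the prefix property. -/
/-- `L(G[p])`: the set of prefixes matched by `G[p]`. -/
def Lang {V T : Type} (P : V → PExp V T) (p : PExp V T) : Set (List T) :=
  {x : List T | ∃ y : List T, CFGMatch P p (x ++ y) y}

/-- A language has the prefix property: no string in it is a proper prefix of
another string in it. -/
def PrefixProp {T : Type} (L : Set (List T)) : Prop :=
  ∀ x ∈ L, ∀ y ∈ L, x <+: y → x = y

/-- Right-linear parsing expressions: `ε`, a terminal, a non-terminal, a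
concatenation of a terminal with a right-linear expression, or a choice of two
right-linear expressions. -/
inductive RightLin {V T : Type} : PExp V T → Prop where
  | eps : RightLin .eps
  | term (a : T) : RightLin (.term a)
  | var (A : V) : RightLin (.var A)
  | cat {a : T} {p₂ : PExp V T} : RightLin p₂ → RightLin (.cat (.term a) p₂)
  | alt {p₁ p₂ : PExp V T} : RightLin p₁ → RightLin p₂ → RightLin (.alt p₁ p₂)

/-! Induction on right-linearity of `p`. Every language `L(G[q])` of an immediate
subexpression embeds into `L(G[p])` by a map reflecting prefixes: the inclusion for a
choice, and `x ↦ a :: x` for `a p₂` (right-linearity makes the left factor a single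
terminal `a`, whose own language `{a}` trivially has the prefix property). -/

namespace PrefixProp

variable {T : Type} {L M : Set (List T)}

theorem mono (hLM : L ⊆ M) (hM : PrefixProp M) : PrefixProp L :=
  fun x hx y hy hxy => hM x (hLM hx) y (hLM hy) hxy

theorem of_subsingleton (hL : L.Subsingleton) : PrefixProp L :=
  fun _ hx _ hy _ => hL hx hy

theorem of_image_cons {a : T} (h : PrefixProp ((a :: ·) '' L)) : PrefixProp L :=
  fun x hx y hy hxy =>
    List.cons_injective <|
      h _ ⟨x, hx, rfl⟩ _ ⟨y, hy, rfl⟩ (List.cons_prefix_cons.mpr ⟨rfl, hxy⟩)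

end PrefixProp

namespace Lang

variable {V T : Type} {P : V → PExp V T}

theorem subsingleton_term (a : T) : (Lang P (.term a)).Subsingleton := by
  suffices ∀ x ∈ Lang P (.term a), x = [a] from
    fun x hx y hy => (this x hx).trans (this y hy).symm
  rintro x ⟨y, h⟩
  generalize hv : x ++ y = v at h
  cases h
  exact List.append_inj' (s₂ := [a]) hv rfl |>.1

theorem alt_left_subset (p₁ p₂ : PExp V T) : Lang P p₁ ⊆ Lang P (.alt p₁ p₂) :=
  fun _ ⟨y, h⟩ => ⟨y, .altL h⟩

theorem alt_right_subset (p₁ p₂ : PExp V T) : Lang P p₂ ⊆ Lang P (.alt p₁ p₂) :=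
  fun _ ⟨y, h⟩ => ⟨y, .altR h⟩

theorem image_cons_subset_cat_term (a : T) (p : PExp V T) :
    (a :: ·) '' Lang P p ⊆ Lang P (.cat (.term a) p) := by
  rintro _ ⟨x, ⟨y, h⟩, rfl⟩
  exact ⟨y, .cat (.term a (x ++ y)) h⟩

end Lang

theorem stmt_16_general {V T : Type}
    (P : V → PExp V T)
    (p : PExp V T) (hp : RightLin p)
    (hpref : PrefixProp (Lang P p)) :
    ∀ q : PExp V T, Subterm q p → PrefixProp (Lang P q) := by
  induction hp with
  | eps | term | var => rintro q ⟨⟩; exact hpref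
  | @cat a p₂ _ ih =>
    rintro q (_ | ⟨⟨⟩⟩ | hq)
    · exact hpref
    · exact .of_subsingleton (Lang.subsingleton_term a)
    · exact ih (.of_image_cons (hpref.mono (Lang.image_cons_subset_cat_term a p₂))) q hq
  | @alt p₁ p₂ _ _ ih₁ ih₂ =>
    rintro q (_ | _ | _ | hq | hq)
    · exact hpref
    · exact ih₁ (hpref.mono (Lang.alt_left_subset p₁ p₂)) q hq
    · exact ih₂ (hpref.mono (Lang.alt_right_subset p₁ p₂)) q hq

/-- in a right-linear PE-CFG, if `L(G[p])` has the prefix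
property for a right-linear `p`, then `L(G[q])` has the prefix property for
every subexpression `q` of `p`. -/
theorem stmt_16 {V T : Type} [Fintype V] [Fintype T]
    (P : V → PExp V T) (hG : ∀ A : V, RightLin (P A))
    (p : PExp V T) (hp : RightLin p)
    (hpref : PrefixProp (Lang P p)) :
    ∀ q : PExp V T, Subterm q p → PrefixProp (Lang P q) :=
  stmt_16_general P p hp hpref
end

section
/- Let G be a right-linear PE-CFG and p a right-linear parsing expression. If L(G[p]) has the prefix property, then for every parsing expression q occurring in G[p] — that is, q is a subexpression of p, or a subexpression of P(A) for some non-terminal A reachable from p — L(G[q]) has the prefix property. -/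
/-- A non-terminal `A` is reachable from `p` (in zero or more steps): `A`
occurs in `p`, or `A` occurs in `P B` for some `B` reachable from `p`. -/
inductive Reach {V T : Type} (P : V → PExp V T) (p : PExp V T) : V → Prop where
  | base {A : V} : Subterm (.var A) p → Reach P p A
  | step {A B : V} : Reach P p B → Subterm (.var A) (P B) → Reach P p A

/-!
Right-linearity is what lets the prefix property pass to subexpressions: the language of `p`
embeds into that of `a p` via `x ↦ a x`, each branch of a choice has a sublanguage of the choice,
and the remaining subexpression `a` has a singleton language. A non-terminal has the language of
its production, so the property then propagates along reachability.
-/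

section PrefixProp

variable {T : Type}

theorem PrefixProp.anti {L L' : Set (List T)} (h : L ⊆ L') (hL' : PrefixProp L') :
    PrefixProp L :=
  fun x hx y hy hxy => hL' x (h hx) y (h hy) hxy

theorem PrefixProp.preimage_cons {L : Set (List T)} (hL : PrefixProp L) (a : T) :
    PrefixProp ((a :: ·) ⁻¹' L) :=
  fun _ hx _ hy hxy => List.cons_injective (hL _ hx _ hy (List.cons_prefix_cons.mpr ⟨rfl, hxy⟩))

theorem prefixProp_singleton (x : List T) : PrefixProp ({x} : Set (List T)) := by
  rintro u rfl v rfl -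
  rfl

end PrefixProp

section Lang

variable {V T : Type} (P : V → PExp V T)

theorem lang_term (a : T) : Lang P (.term a) = {[a]} := by
  ext x
  constructor
  · rintro ⟨y, h⟩
    generalize hv : x ++ y = v at h
    cases h
    exact List.append_cancel_right (hv : x ++ y = [a] ++ y)
  · rintro rfl
    exact ⟨[], .term a []⟩

theorem lang_var (A : V) : Lang P (.var A) = Lang P (P A) := by
  ext x
  constructor
  · rintro ⟨y, ⟨⟩⟩
    exact ⟨y, ‹_›⟩
  · rintro ⟨y, h⟩
    exact ⟨y, .var h⟩

theorem lang_subset_preimage_lang_cat_term (a : T) (p : PExp V T) :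
    Lang P p ⊆ (a :: ·) ⁻¹' Lang P (.cat (.term a) p) :=
  fun x ⟨y, h⟩ => ⟨y, .cat (.term a (x ++ y)) h⟩

theorem lang_subset_lang_alt_left (p₁ p₂ : PExp V T) : Lang P p₁ ⊆ Lang P (.alt p₁ p₂) :=
  fun _ ⟨y, h⟩ => ⟨y, .altL h⟩

theorem lang_subset_lang_alt_right (p₁ p₂ : PExp V T) : Lang P p₂ ⊆ Lang P (.alt p₁ p₂) :=
  fun _ ⟨y, h⟩ => ⟨y, .altR h⟩

end Lang

variable {V T : Type} {P : V → PExp V T}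

theorem PrefixProp.of_subterm {q r : PExp V T} (hqr : Subterm q r) (hr : RightLin r)
    (hpref : PrefixProp (Lang P r)) : PrefixProp (Lang P q) := by
  induction hqr with
  | refl => exact hpref
  | catL hq _ =>
    cases hr
    cases hq
    rw [lang_term]
    exact prefixProp_singleton _
  | catR _ ih =>
    cases hr with
    | cat hp₂ =>
      exact ih hp₂ ((hpref.preimage_cons _).anti (lang_subset_preimage_lang_cat_term P _ _))
  | altL _ ih =>
    cases hr with
    | alt hp₁ _ => exact ih hp₁ (hpref.anti (lang_subset_lang_alt_left P _ _))
  | altR _ ih =>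
    cases hr with
    | alt _ hp₂ => exact ih hp₂ (hpref.anti (lang_subset_lang_alt_right P _ _))

theorem PrefixProp.of_reach (hG : ∀ A : V, RightLin (P A)) {p : PExp V T} (hp : RightLin p)
    (hpref : PrefixProp (Lang P p)) {A : V} (hA : Reach P p A) : PrefixProp (Lang P (P A)) := by
  induction hA with
  | base hs => exact lang_var P _ ▸ hpref.of_subterm hs hp
  | step _ hs ih => exact lang_var P _ ▸ ih.of_subterm hs (hG _)

theorem stmt_17_general {V T : Type}
    (P : V → PExp V T) (hG : ∀ A : V, RightLin (P A))
    (p : PExp V T) (hp : RightLin p)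
    (hpref : PrefixProp (Lang P p)) :
    ∀ q : PExp V T,
      (Subterm q p ∨ ∃ A : V, Reach P p A ∧ Subterm q (P A)) →
      PrefixProp (Lang P q) := by
  rintro q (hq | ⟨A, hA, hq⟩)
  · exact hpref.of_subterm hq hp
  · exact (hpref.of_reach hG hp hA).of_subterm hq (hG A)

/-- in a right-linear PE-CFG, if `L(G[p])` has the prefix
property for a right-linear `p`, then `L(G[q])` has the prefix property for
every expression `q` occurring in `G[p]`: a subexpression of `p`, or of `P A`
for some non-terminal `A` reachable from `p`. -/
theorem stmt_17 {V T : Type} [Fintype V] [Fintype T]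
    (P : V → PExp V T) (hG : ∀ A : V, RightLin (P A))
    (p : PExp V T) (hp : RightLin p)
    (hpref : PrefixProp (Lang P p)) :
    ∀ q : PExp V T,
      (Subterm q p ∨ ∃ A : V, Reach P p A ∧ Subterm q (P A)) →
      PrefixProp (Lang P q) :=
  stmt_17_general P hG p hp hpref
end
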